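/- arXiv:1007.2103 — 4 statements merged into one kernel-verified Lean document; each statement's English description precedes it below -/
import Mathlib

section
/- Every loopless undirected graph G on a finite vertex set with n vertices has Boolean dimension at most n − 1. -/
/-- A tournament on a vertex set `V`: a loopless directed graph such that for all
distinct `x, y` exactly one of `(x,y)`, `(y,x)` is an arc. -/
structure Tournament (V : Type*) where
  rel : V → V → Prop
  irrefl : ∀ x, ¬ rel x x
  total : ∀ x y, x ≠ y → rel x y ∨ rel y x
  asymm : ∀ x y, rel x y → ¬ rel y x

namespace Tournament

variable {V : Type*} {W : Type*}

/-- The tournament obtained from `T` by reversing all arcs both of whose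
endpoints lie in `X`. -/
def inv (T : Tournament V) (X : Set V) : Tournament V where
  rel x y := (x ∈ X ∧ y ∈ X ∧ T.rel y x) ∨ ((x ∉ X ∨ y ∉ X) ∧ T.rel x y)
  irrefl x := by have := T.irrefl x; tauto
  total x y hxy := by
    have := T.total x y hxy
    by_cases hx : x ∈ X <;> by_cases hy : y ∈ X <;> tauto
  asymm x y := by have h1 := T.asymm x y; have h2 := T.asymm y x; tauto

/-- Successive inversions along a finite sequence of subsets (`X_0` first). -/
def invSeq (T : Tournament V) (Xs : List (Set V)) : Tournament V :=
  Xs.foldl Tournament.inv T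

/-- A tournament is acyclic (transitive) when its arc relation is transitive,
i.e. a strict linear order. -/
def IsAcyclic (T : Tournament V) : Prop :=
  ∀ x y z, T.rel x y → T.rel y z → T.rel x z

/-- The inversion index: the least number of subsets to be inverted to reach an
acyclic tournament. -/
noncomputable def index (T : Tournament V) : ℕ :=
  sInf {m | ∃ Xs : List (Set V), Xs.length = m ∧ (T.invSeq Xs).IsAcyclic}

/-- Induced subtournament on a set of vertices. -/
def restrict (T : Tournament V) (A : Set V) : Tournament A where
  rel x y := T.rel x y
  irrefl x := T.irrefl x
  total x y hxy := T.total x y (fun h => hxy (Subtype.ext h))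
  asymm x y := T.asymm x y

/-- `T − x`: the subtournament induced on `V ∖ {x}`. -/
def erase (T : Tournament V) (x : V) : Tournament {y : V // y ≠ x} :=
  T.restrict {y | y ≠ x}

/-- `S` embeds into `T`: `S` is isomorphic to the subtournament of `T` induced on
some subset of the vertices of `T`. -/
def Embeds (S : Tournament V) (T : Tournament W) : Prop :=
  ∃ f : V → W, Function.Injective f ∧ ∀ x y, S.rel x y ↔ T.rel (f x) (f y)

/-- Isomorphism of tournaments. -/
def Iso (S : Tournament V) (T : Tournament W) : Prop :=
  ∃ e : V ≃ W, ∀ x y, S.rel x y ↔ T.rel (e x) (e y)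

/-- The dual tournament, obtained by reversing all arcs. -/
def dual (T : Tournament V) : Tournament V where
  rel x y := T.rel y x
  irrefl x := T.irrefl x
  total x y hxy := (T.total x y hxy).symm
  asymm x y h := T.asymm y x h

/-- `X` is an interval of `T`. -/
def IsInterval (T : Tournament V) (X : Set V) : Prop :=
  ∀ y ∉ X, (∀ x ∈ X, T.rel x y) ∨ (∀ x ∈ X, T.rel y x)

/-- A tournament is indecomposable when all its intervals are trivial. -/
def Indecomposable (T : Tournament V) : Prop :=
  ∀ X : Set V, T.IsInterval X → X = ∅ ∨ X = Set.univ ∨ ∃ x, X = {x}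

end Tournament

/-- The transitive tournament `n̲` on `{0, …, n−1}`, with arcs `(i,j)` for `i < j`. -/
def linear (n : ℕ) : Tournament (Fin n) where
  rel x y := x < y
  irrefl x := lt_irrefl x
  total _ _ h := lt_or_gt_of_ne h
  asymm _ _ h := lt_asymm h

/-- `2ℕ_{<k} = {0, 2, …, 2(k−1)}` as a subset of `Fin N`. -/
def evensLT {N : ℕ} (k : ℕ) : Set (Fin N) := {i | (i : ℕ) % 2 = 0 ∧ (i : ℕ) < 2 * k}

/-- `2ℕ_{<k}+1 = {1, 3, …, 2k−1}` as a subset of `Fin N`. -/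
def oddsLT {N : ℕ} (k : ℕ) : Set (Fin N) := {i | (i : ℕ) % 2 = 1 ∧ (i : ℕ) < 2 * k}

/-- The Boolean dimension of a (loopless, undirected) graph `G`: the least `m` such
that `G` can be represented by the non-orthogonality relation on `(𝔽₂)^m` with the
ordinary scalar product. -/
noncomputable def booleanDim {V : Type*} (G : SimpleGraph V) : ℕ :=
  sInf {m | ∃ f : V → (Fin m → ZMod 2), ∀ x y : V, x ≠ y →
    (G.Adj x y ↔ ∑ i, f x i * f y i = 1)}

/-! Over any field `K`, a symmetric matrix `A` indexed by `n + 1` vertices agrees off the diagonal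
with the Gram matrix of `n + 1` vectors spanning `K^n`. Induct on `n`: represent all vertices but
`v` by vectors `g x` spanning `K^n`. These `n + 1` vectors are dependent, so dropping a suitable
`x₀` leaves a basis, and some `w` has the prescribed products `w ⬝ g x = A v x` for all `x ≠ x₀`.
Give `v` the vector `(1, w)` and every other `x` the vector `(c x, g x)` with
`c x = A v x - w ⬝ g x`; as `c` vanishes off `x₀`, the new coordinate does not disturb the
products between old vertices. The Boolean dimension bound is the case `K = 𝔽₂`, `A` the
adjacency matrix. -/

open Matrix Module Submodule Set

section OffDiagonalGram

lemma exists_span_range_subtype_ne_eq_top {K M ι : Type*} [DivisionRing K] [AddCommGroup M]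
    [Module K M] [FiniteDimensional K M] [Fintype ι] {g : ι → M}
    (hcard : finrank K M < Fintype.card ι) (hg : span K (range g) = ⊤) :
    ∃ i₀, span K (range fun i : {i // i ≠ i₀} => g i.1) = ⊤ := by
  have hdep : ¬ LinearIndependent K g := fun h => h.fintype_card_le_finrank.not_gt hcard
  obtain ⟨i₀, hi₀⟩ : ∃ i₀, g i₀ ∈ span K (g '' (univ \ {i₀})) := by
    simpa [linearIndependent_iff_notMem_span] using hdep
  refine ⟨i₀, eq_top_iff.2 (hg ▸ span_le.2 ?_)⟩
  rintro _ ⟨i, rfl⟩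
  by_cases hi : i = i₀
  · subst hi
    refine span_mono ?_ hi₀
    rintro _ ⟨j, hj, rfl⟩
    exact ⟨⟨j, by simpa using hj⟩, rfl⟩
  · exact subset_span ⟨⟨i, hi⟩, rfl⟩

lemma exists_dotProduct_eq_of_span_eq_top {K m ι : Type*} [Field K] [Fintype m] [DecidableEq m]
    [Fintype ι] {g : ι → m → K} (hg : span K (range g) = ⊤)
    (hcard : Fintype.card ι = Fintype.card m) (a : ι → K) :
    ∃ w : m → K, ∀ i, w ⬝ᵥ g i = a i := by
  let b := basisOfTopLeSpanOfCardEqFinrank g hg.ge (by rw [hcard, finrank_fintype_fun_eq_card])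
  refine ⟨(dotProductEquiv K m).symm (b.constr K a), fun i => ?_⟩
  have := LinearMap.congr_fun ((dotProductEquiv K m).apply_symm_apply (b.constr K a)) (b i)
  rwa [b.constr_basis, dotProductEquiv_apply_apply, coe_basisOfTopLeSpanOfCardEqFinrank] at this

lemma eq_top_of_vecCons_mem {R ι : Type*} [Ring R] {n : ℕ} {S : Submodule R (Fin (n + 1) → R)}
    {g : ι → Fin n → R} (hg : span R (range g) = ⊤)
    (hS : ∀ i, (vecCons 0 (g i) : Fin (n + 1) → R) ∈ S) {w : Fin n → R}
    (hw : (vecCons 1 w : Fin (n + 1) → R) ∈ S) : S = ⊤ := by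
  let e := Fin.consLinearEquiv R fun _ : Fin (n + 1) => R
  have hcons_zero : ∀ u, (vecCons 0 u : Fin (n + 1) → R) ∈ S := by
    have : span R (range g) ≤ S.comap (e.toLinearMap ∘ₗ LinearMap.inr R R _) :=
      span_le.2 (by rintro _ ⟨i, rfl⟩; exact hS i)
    exact fun u => this (hg ▸ mem_top)
  refine eq_top_iff.2 fun z _ => ?_
  have hz : z = z 0 • (vecCons 1 w - vecCons 0 w) + vecCons 0 (vecTail z) := by
    ext i; refine Fin.cases ?_ (fun j => ?_) i <;> simp [vecTail]
  rw [hz]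
  exact add_mem (smul_mem _ _ (sub_mem hw (hcons_zero w))) (hcons_zero _)

variable {K : Type*} [Field K]

lemma exists_offDiag_gram_option {ι : Type*} [Fintype ι] {n : ℕ}
    (hcard : Fintype.card ι = n + 1) (A : Matrix (Option ι) (Option ι) K) (hA : A.IsSymm)
    {g : ι → Fin n → K} (hgA : ∀ x y, x ≠ y → g x ⬝ᵥ g y = A (some x) (some y))
    (hg : span K (range g) = ⊤) :
    ∃ f : Option ι → Fin (n + 1) → K,
      (∀ x y, x ≠ y → f x ⬝ᵥ f y = A x y) ∧ span K (range f) = ⊤ := by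
  classical
  obtain ⟨x₀, hx₀⟩ := exists_span_range_subtype_ne_eq_top (by simp [hcard]) hg
  obtain ⟨w, hw⟩ := exists_dotProduct_eq_of_span_eq_top hx₀
    (by simp [Fintype.card_subtype_compl, hcard]) fun x => A none (some x)
  let c x := A none (some x) - w ⬝ᵥ g x
  have hc : ∀ x, x ≠ x₀ → c x = 0 := fun x hx => sub_eq_zero.2 (hw ⟨x, hx⟩).symm
  let f : Option ι → Fin (n + 1) → K
    | none => vecCons 1 w
    | some x => vecCons (c x) (g x)
  have hf_none : ∀ x, f none ⬝ᵥ f (some x) = A none (some x) := by simp [f, c]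
  refine ⟨f, ?_, eq_top_of_vecCons_mem hx₀ (fun x => subset_span ⟨some x, ?_⟩)
    (subset_span ⟨none, rfl⟩)⟩
  · rintro (_ | x) (_ | y) hxy
    · exact absurd rfl hxy
    · exact hf_none y
    · rw [dotProduct_comm, hf_none, hA.apply]
    · have hxy : x ≠ y := fun h => hxy (congrArg some h)
      have hcc : c x * c y = 0 := by
        rcases eq_or_ne x x₀ with rfl | hx
        · simp [hc y hxy.symm]
        · simp [hc x hx]
      simp [f, hcc, hgA x y hxy]
  · simp [f, hc x x.2]

theorem exists_offDiag_gram_of_card_eq_succ (n : ℕ) {V : Type*} [Fintype V]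
    (hV : Fintype.card V = n + 1) (A : Matrix V V K) (hA : A.IsSymm) :
    ∃ f : V → Fin n → K, (∀ x y, x ≠ y → f x ⬝ᵥ f y = A x y) ∧ span K (range f) = ⊤ := by
  classical
  induction n generalizing V with
  | zero =>
    have : Subsingleton V := Fintype.card_le_one_iff_subsingleton.1 hV.le
    exact ⟨0, fun x y hxy => absurd (Subsingleton.elim x y) hxy, Subsingleton.elim _ _⟩
  | succ n ih =>
    obtain ⟨v⟩ : Nonempty V := Fintype.card_pos_iff.1 (by omega)
    have hV' : Fintype.card {x // x ≠ v} = n + 1 := by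
      rw [Fintype.card_subtype_compl, Fintype.card_subtype_eq, hV]; rfl
    let e := Equiv.optionSubtypeNe v
    obtain ⟨g, hgA, hg⟩ := ih hV' (A.submatrix Subtype.val Subtype.val) (hA.submatrix _)
    obtain ⟨f, hfA, hf⟩ :=
      exists_offDiag_gram_option hV' (A.submatrix e e) (hA.submatrix e) hgA hg
    refine ⟨f ∘ e.symm, fun x y hxy => ?_, by rwa [e.symm.surjective.range_comp]⟩
    simpa using hfA _ _ (e.symm.injective.ne hxy)

end OffDiagonalGram

/-- every loopless undirected graph on `n` vertices has Boolean
dimension at most `n − 1`. -/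
theorem booleanDim_le_card_sub_one {V : Type*} [Fintype V] (G : SimpleGraph V) :
    booleanDim G ≤ Fintype.card V - 1 := by
  classical
  rcases isEmpty_or_nonempty V with hV | hV
  · exact Nat.sInf_le ⟨isEmptyElim, fun x => isEmptyElim x⟩
  obtain ⟨f, hf, -⟩ := exists_offDiag_gram_of_card_eq_succ (Fintype.card V - 1)
    (Nat.succ_pred_eq_of_pos Fintype.card_pos).symm (G.adjMatrix (ZMod 2)) G.isSymm_adjMatrix
  refine Nat.sInf_le ⟨f, fun x y hxy => ?_⟩
  change G.Adj x y ↔ f x ⬝ᵥ f y = 1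
  by_cases hadj : G.Adj x y <;> simp [hf x y hxy, hadj]
end

section
/- For every n ≥ 1, the path on n vertices (the graph whose vertices can be enumerated x_1, …, x_n with edges exactly the pairs {x_j, x_{j+1}} for 1 ≤ j < n) has Boolean dimension exactly n − 1. -/
/-!
The incidence vectors of the edges, taken in `(𝔽₂)^E`, represent any finite graph: two distinct
vertices have inner product `1` exactly when they are the two ends of an edge. The path on `n + 1`
vertices has `n` edges. Conversely, if `f` represents that path, the matrix
`(f i ⬝ᵥ f (j + 1))_{i, j < n}` is lower unitriangular, because among the vertices `0, …, j`
only `j` is adjacent to `j + 1`; its rank `n` is at most the dimension of the representation.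
-/

open Matrix SimpleGraph

section BooleanRep

variable {V W : Type*}

def IsBooleanRep (G : SimpleGraph V) {m : ℕ} (f : V → Fin m → ZMod 2) : Prop :=
  ∀ x y, x ≠ y → (G.Adj x y ↔ f x ⬝ᵥ f y = 1)

variable {G : SimpleGraph V} {H : SimpleGraph W} {m : ℕ}

theorem booleanDim_eq_sInf :
    booleanDim G = sInf {m | ∃ f : V → Fin m → ZMod 2, IsBooleanRep G f} :=
  rfl

theorem booleanDim_le {f : V → Fin m → ZMod 2} (hf : IsBooleanRep G f) : booleanDim G ≤ m :=
  Nat.sInf_le ⟨f, hf⟩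

theorem IsBooleanRep.comp {f : W → Fin m → ZMod 2} (hf : IsBooleanRep H f) (φ : G ↪g H) :
    IsBooleanRep G (f ∘ φ) := fun _ _ hxy =>
  φ.map_adj_iff.symm.trans (hf _ _ (φ.injective.ne hxy))

theorem booleanDim_congr (φ : G ≃g H) : booleanDim G = booleanDim H := by
  rw [booleanDim_eq_sInf, booleanDim_eq_sInf]
  exact congrArg sInf <| Set.ext fun _ =>
    ⟨fun ⟨f, hf⟩ => ⟨f ∘ φ.symm, IsBooleanRep.comp hf φ.symm.toEmbedding⟩,
      fun ⟨f, hf⟩ => ⟨f ∘ φ, IsBooleanRep.comp hf φ.toEmbedding⟩⟩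

theorem isBooleanRep_incidence [DecidableEq V] (ε : Fin m ≃ G.edgeSet) :
    IsBooleanRep G fun x i => if x ∈ (ε i : Sym2 V) then 1 else 0 := by
  intro x y hxy
  have hdot : ((fun i => if x ∈ (ε i : Sym2 V) then 1 else 0) ⬝ᵥ
      fun i => if y ∈ (ε i : Sym2 V) then (1 : ZMod 2) else 0) =
      ∑ i, if (ε i : Sym2 V) = s(x, y) then 1 else 0 := by
    simp only [dotProduct, ite_zero_mul_ite_zero, one_mul, Sym2.mem_and_mem_iff hxy]
  rw [hdot]
  by_cases hadj : G.Adj x y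
  · have hε : ∀ i, (ε i : Sym2 V) = s(x, y) ↔ i = ε.symm ⟨s(x, y), hadj⟩ := fun i => by
      rw [Equiv.eq_symm_apply, Subtype.ext_iff]
    simp [hε, hadj]
  · have hε : ∀ i, (ε i : Sym2 V) ≠ s(x, y) := fun i h => hadj (G.mem_edgeSet.1 (h ▸ (ε i).2))
    simp [hε, hadj]

theorem exists_isBooleanRep_of_finite [Finite G.edgeSet] :
    ∃ f : V → Fin (Nat.card G.edgeSet) → ZMod 2, IsBooleanRep G f := by
  classical
  exact ⟨_, isBooleanRep_incidence (Finite.equivFin G.edgeSet).symm⟩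

theorem booleanDim_le_natCard_edgeSet [Finite G.edgeSet] :
    booleanDim G ≤ Nat.card G.edgeSet :=
  let ⟨_, hf⟩ := exists_isBooleanRep_of_finite (G := G)
  booleanDim_le hf

theorem exists_isBooleanRep_booleanDim [Finite G.edgeSet] :
    ∃ f : V → Fin (booleanDim G) → ZMod 2, IsBooleanRep G f := by
  have hne : {m | ∃ f : V → Fin m → ZMod 2, IsBooleanRep G f}.Nonempty :=
    ⟨_, exists_isBooleanRep_of_finite⟩
  rw [booleanDim_eq_sInf]
  exact Nat.sInf_mem hne

end BooleanRep

theorem card_le_of_dotProduct_lowerTriangular {K ι κ : Type*} [Field K] [Fintype ι]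
    [LinearOrder ι] [Fintype κ] (u w : ι → κ → K) (hlt : ∀ i j, i < j → u i ⬝ᵥ w j = 0)
    (hdiag : ∀ i, u i ⬝ᵥ w i ≠ 0) : Fintype.card ι ≤ Fintype.card κ := by
  set M : Matrix ι ι K := of u * (of w)ᵀ
  have hM : ∀ i j, M i j = u i ⬝ᵥ w j := fun _ _ => rfl
  have hlower : M.IsLowerTriangular := fun i j hij => (hM i j).trans (hlt i j hij)
  have hdet : IsUnit M.det := by
    rw [det_of_isLowerTriangular M hlower, isUnit_iff_ne_zero, Finset.prod_ne_zero_iff]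
    exact fun i _ => (hM i i).trans_ne (hdiag i)
  calc Fintype.card ι = M.rank := (rank_of_isUnit M ((isUnit_iff_isUnit_det M).2 hdet)).symm
    _ ≤ (of u).rank := rank_mul_le_left _ _
    _ ≤ Fintype.card κ := rank_le_card_width _

theorem natCard_edgeSet_pathGraph (n : ℕ) : Nat.card (pathGraph (n + 1)).edgeSet = n := by
  refine (Nat.card_eq_of_bijective (α := Fin n) (β := (pathGraph (n + 1)).edgeSet)
    (fun i => ⟨s(i.castSucc, i.succ), by simp [pathGraph_adj]⟩)
    ⟨fun i j hij => ?_, ?_⟩).symm.trans (Nat.card_fin n)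
  · simp only [Subtype.mk.injEq, Sym2.eq_iff, Fin.ext_iff, Fin.val_castSucc, Fin.val_succ] at hij
    omega
  · rintro ⟨e, he⟩
    induction e using Sym2.ind with
    | h a b =>
      rw [mem_edgeSet, pathGraph_adj] at he
      rcases he with h | h
      · exact ⟨⟨a, by omega⟩, by ext; simp [Fin.ext_iff, h]⟩
      · exact ⟨⟨b, by omega⟩, by ext; simp [Fin.ext_iff, h, or_comm]⟩

theorem IsBooleanRep.le_of_pathGraph {n m : ℕ} {f : Fin (n + 1) → Fin m → ZMod 2}
    (hf : IsBooleanRep (pathGraph (n + 1)) f) : n ≤ m := by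
  have hzero : ∀ a : ZMod 2, a ≠ 1 → a = 0 := by decide
  have hlt : ∀ i j : Fin n, i < j → f i.castSucc ⬝ᵥ f j.succ = 0 := fun i j hij =>
    hzero _ fun h => by
      have hadj := (hf _ _ (Fin.castSucc_lt_succ_iff.2 hij.le).ne).2 h
      simp only [pathGraph_adj, Fin.val_castSucc, Fin.val_succ] at hadj
      omega
  have hdiag : ∀ i : Fin n, f i.castSucc ⬝ᵥ f i.succ ≠ 0 := fun i => by
    have hadj : (pathGraph (n + 1)).Adj i.castSucc i.succ := by simp [pathGraph_adj]
    rw [(hf _ _ hadj.ne).1 hadj]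
    exact one_ne_zero
  simpa using card_le_of_dotProduct_lowerTriangular (f ∘ Fin.castSucc) (f ∘ Fin.succ) hlt hdiag

theorem booleanDim_pathGraph (n : ℕ) : booleanDim (pathGraph (n + 1)) = n := by
  obtain ⟨f, hf⟩ := exists_isBooleanRep_booleanDim (G := pathGraph (n + 1))
  exact le_antisymm (booleanDim_le_natCard_edgeSet.trans_eq (natCard_edgeSet_pathGraph n))
    hf.le_of_pathGraph

/-- for `n ≥ 1`, the path on `n` vertices has Boolean dimension
exactly `n − 1`. -/
theorem booleanDim_path {V : Type*} (G : SimpleGraph V) (n : ℕ) (hn : 1 ≤ n)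
    (e : Fin n ≃ V)
    (hpath : ∀ a b : Fin n, G.Adj (e a) (e b) ↔
      ((a : ℕ) + 1 = (b : ℕ) ∨ (b : ℕ) + 1 = (a : ℕ))) :
    booleanDim G = n - 1 := by
  obtain ⟨k, rfl⟩ := Nat.exists_eq_add_of_le' hn
  let φ : pathGraph (k + 1) ≃g G := ⟨e, by simp [hpath, pathGraph_adj]⟩
  rw [← booleanDim_congr φ, booleanDim_pathGraph, Nat.add_sub_cancel]
end

section
/- Let T be a tournament on a finite vertex set V with n vertices and let P be a spanning path on V (an enumeration x_1, …, x_n of V with edges exactly {x_j, x_{j+1}} for 1 ≤ j < n). Let T' be the tournament obtained from T by reversing exactly the arcs whose endpoint pair is an edge of P. Then the least m such that T' = Inv(T, (X_i)_{i<m}) for some subsets X_i ⊆ V is exactly n − 1; in particular the maximal distance n − 1 between two tournaments on V is attained. -/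
/-- Consecutiveness in `Fin n`: the edges of the standard path. -/
def pathAdj {n : ℕ} (a b : Fin n) : Prop :=
  (a : ℕ) + 1 = (b : ℕ) ∨ (b : ℕ) + 1 = (a : ℕ)

/-!
Inverting `X` reverses the arc between `x ≠ y` exactly when both lie in `X`, so `T'` is reached by
inverting `X_0, …, X_{m-1}` iff, for all `x ≠ y`, the number of `X_i` containing `x` and `y` is odd
exactly when `xy` is an edge of the path. Inverting the `n - 1` edges of the path one at a time
achieves this. Conversely, these parities are the off-diagonal entries of `Nᵀ N` over `ZMod 2`,
where `N` is the `m × V` incidence matrix, so `Nᵀ N` has rank at most `m`; on the other hand,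
along the path its entries form a triangular `(n - 1)`-minor with nonzero diagonal.
-/

open Matrix

open scoped Classical in
theorem Set.indicator_one_mul_indicator_one {V M₀ : Type*} [MulZeroOneClass M₀] (X : Set V)
    (x y : V) :
    X.indicator (1 : V → M₀) x * X.indicator 1 y = if x ∈ X ∧ y ∈ X then 1 else 0 := by
  by_cases hx : x ∈ X <;> by_cases hy : y ∈ X <;> simp [hx, hy]

namespace Tournament

variable {V : Type*}

theorem rel_swap_iff {T : Tournament V} {x y : V} (h : x ≠ y) : T.rel y x ↔ ¬ T.rel x y :=
  ⟨fun hyx hxy => T.asymm x y hxy hyx, (T.total x y h).resolve_left⟩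

theorem inv_rel_iff_of_mem {T : Tournament V} {X : Set V} {x y : V} (hx : x ∈ X) (hy : y ∈ X) :
    (T.inv X).rel x y ↔ T.rel y x := by
  simp only [inv]; tauto

theorem inv_rel_iff_of_not_mem {T : Tournament V} {X : Set V} {x y : V} (h : ¬(x ∈ X ∧ y ∈ X)) :
    (T.inv X).rel x y ↔ T.rel x y := by
  simp only [inv]; tauto

theorem invSeq_cons (T : Tournament V) (X : Set V) (Xs : List (Set V)) :
    T.invSeq (X :: Xs) = (T.inv X).invSeq Xs := rfl

noncomputable def incidence (Xs : List (Set V)) : Matrix (Fin Xs.length) V (ZMod 2) :=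
  Matrix.of fun i => Xs[i].indicator 1

noncomputable def coverMatrix (Xs : List (Set V)) : Matrix V V (ZMod 2) :=
  (incidence Xs)ᵀ * incidence Xs

theorem coverMatrix_apply (Xs : List (Set V)) (x y : V) :
    coverMatrix Xs x y = (Xs.map fun X => X.indicator 1 x * X.indicator 1 y).sum := by
  simpa [coverMatrix, incidence, mul_apply] using
    Fin.sum_univ_fun_getElem Xs fun X => X.indicator 1 x * X.indicator 1 y

theorem rank_coverMatrix_le [Fintype V] (Xs : List (Set V)) :
    (coverMatrix Xs).rank ≤ Xs.length :=
  (rank_mul_le_right _ _).trans ((rank_le_card_height _).trans (Fintype.card_fin _).le)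

open scoped Classical in
theorem coverMatrix_cons (X : Set V) (Xs : List (Set V)) (x y : V) :
    coverMatrix (X :: Xs) x y = (if x ∈ X ∧ y ∈ X then 1 else 0) + coverMatrix Xs x y := by
  simp only [coverMatrix_apply, List.map_cons, List.sum_cons, Set.indicator_one_mul_indicator_one]

theorem invSeq_rel_iff {T : Tournament V} {x y : V} (Xs : List (Set V)) (h : x ≠ y) :
    (T.invSeq Xs).rel x y ↔ (coverMatrix Xs x y = 0 ↔ T.rel x y) := by
  induction Xs generalizing T with
  | nil => simp [invSeq, coverMatrix_apply]
  | cons X Xs ih =>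
    rw [invSeq_cons, ih, coverMatrix_cons]
    by_cases hX : x ∈ X ∧ y ∈ X
    · have one_add_eq_zero : ∀ c : ZMod 2, 1 + c = 0 ↔ c ≠ 0 := by decide
      rw [inv_rel_iff_of_mem hX.1 hX.2, rel_swap_iff h, if_pos hX, one_add_eq_zero]
      tauto
    · rw [inv_rel_iff_of_not_mem hX, if_neg hX, zero_add]

theorem forall_invSeq_rel_iff {T T' : Tournament V} {Xs : List (Set V)} :
    (∀ x y, (T.invSeq Xs).rel x y ↔ T'.rel x y) ↔
      ∀ x y, x ≠ y → (coverMatrix Xs x y ≠ 0 ↔ (T'.rel x y ↔ T.rel y x)) := by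
  refine forall₂_congr fun x y => ?_
  rcases eq_or_ne x y with rfl | hxy
  · simp [(T.invSeq Xs).irrefl, T'.irrefl]
  · rw [invSeq_rel_iff Xs hxy, rel_swap_iff hxy]
    simp only [ne_eq, hxy, not_false_eq_true, forall_const]
    tauto

def pathEdges {n : ℕ} (e : Fin n ≃ V) : List (Set V) :=
  List.ofFn fun i : Fin (n - 1) => {v | (e.symm v : ℕ) = i ∨ (e.symm v : ℕ) = i + 1}

theorem length_pathEdges {n : ℕ} (e : Fin n ≃ V) : (pathEdges e).length = n - 1 :=
  List.length_ofFn

open scoped Classical in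
theorem coverMatrix_pathEdges_apply {n : ℕ} (e : Fin n ≃ V) {x y : V} (hxy : x ≠ y) :
    coverMatrix (pathEdges e) x y = if pathAdj (e.symm x) (e.symm y) then 1 else 0 := by
  have hab : (e.symm x : ℕ) ≠ e.symm y := fun h => hxy (e.symm.injective (Fin.ext h))
  have ha := (e.symm x).isLt
  have hb := (e.symm y).isLt
  simp only [coverMatrix_apply, pathEdges, List.map_ofFn, List.sum_ofFn, Function.comp_def,
    Set.indicator_one_mul_indicator_one, Set.mem_ofPred_eq]
  split_ifs with hadj
  · unfold pathAdj at hadj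
    rw [Finset.sum_eq_single ⟨min (e.symm x : ℕ) (e.symm y), by omega⟩]
    · exact if_pos (by simp only; omega)
    · intro i _ hi
      rw [if_neg]
      intro h
      exact hi (Fin.ext (by simp only; omega))
    · simp
  · unfold pathAdj at hadj
    exact Finset.sum_eq_zero fun i _ => if_neg (by omega)

end Tournament

theorem Matrix.sub_one_le_rank_of_superdiagonal {R : Type*} [CommRing R] [IsDomain R] {n : ℕ}
    (M : Matrix (Fin n) (Fin n) R) (hsuper : ∀ i j : Fin n, (i : ℕ) + 1 = j → M i j ≠ 0)
    (habove : ∀ i j : Fin n, (i : ℕ) + 1 < j → M i j = 0) : n - 1 ≤ M.rank := by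
  let B : Matrix (Fin (n - 1)) (Fin (n - 1)) R :=
    M.submatrix (fun i => ⟨i, by omega⟩) (fun j => ⟨j + 1, by omega⟩)
  have hB : B.IsLowerTriangular := fun i j hij =>
    habove _ _ (by simp only [OrderDual.toDual_lt_toDual, Fin.lt_def] at hij; simp only; omega)
  have hdet : B.det ≠ 0 := by
    rw [det_of_isLowerTriangular B hB]
    exact Finset.prod_ne_zero_iff.2 fun i _ => hsuper _ _ rfl
  calc n - 1 = B.rank := by rw [rank_of_det_ne_zero hdet, Fintype.card_fin]
    _ ≤ M.rank := rank_submatrix_le _ _ _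

theorem dist_to_path_reversal_general {V : Type*} [Fintype V] (n : ℕ)
    (e : Fin n ≃ V) (T T' : Tournament V)
    (hT' : ∀ x y : V, x ≠ y →
      (T'.rel x y ↔
        ((pathAdj (e.symm x) (e.symm y) ∧ T.rel y x) ∨
         (¬ pathAdj (e.symm x) (e.symm y) ∧ T.rel x y)))) :
    sInf {m | ∃ Xs : List (Set V), Xs.length = m ∧
        ∀ x y, (T.invSeq Xs).rel x y ↔ T'.rel x y} = n - 1 := by
  have reaches_iff (Xs : List (Set V)) : (∀ x y, (T.invSeq Xs).rel x y ↔ T'.rel x y) ↔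
      ∀ x y, x ≠ y → (Tournament.coverMatrix Xs x y ≠ 0 ↔ pathAdj (e.symm x) (e.symm y)) := by
    refine Tournament.forall_invSeq_rel_iff.trans <|
      forall₂_congr fun x y => forall_congr' fun hxy => ?_
    rw [hT' x y hxy, Tournament.rel_swap_iff hxy]
    by_cases hadj : pathAdj (e.symm x) (e.symm y) <;> simp [hadj]
  have path_reaches : n - 1 ∈ {m | ∃ Xs : List (Set V), Xs.length = m ∧
      ∀ x y, (T.invSeq Xs).rel x y ↔ T'.rel x y} := by
    refine ⟨Tournament.pathEdges e, Tournament.length_pathEdges e,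
      (reaches_iff _).2 fun x y hxy => ?_⟩
    rw [Tournament.coverMatrix_pathEdges_apply e hxy]
    split_ifs <;> simpa
  refine le_antisymm (Nat.sInf_le path_reaches) (le_csInf ⟨_, path_reaches⟩ ?_)
  rintro _ ⟨Xs, rfl, hXs⟩
  have entry_ne_zero_iff (i j : Fin n) (hij : (i : ℕ) ≠ j) :
      (Tournament.coverMatrix Xs).submatrix e e i j ≠ 0 ↔ pathAdj i j := by
    simpa using (reaches_iff Xs).1 hXs (e i) (e j) (e.injective.ne (Fin.ne_of_val_ne hij))
  calc n - 1 ≤ ((Tournament.coverMatrix Xs).submatrix e e).rank :=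
        sub_one_le_rank_of_superdiagonal _
          (fun i j hij => (entry_ne_zero_iff i j (by omega)).2 (.inl hij))
          (fun i j hij => not_not.1 fun h =>
            absurd ((entry_ne_zero_iff i j (by omega)).1 h) (by unfold pathAdj; omega))
    _ = (Tournament.coverMatrix Xs).rank := rank_submatrix _ _ _
    _ ≤ Xs.length := Tournament.rank_coverMatrix_le Xs

/-- if `T'` is obtained from a tournament `T` on `n` vertices by
reversing exactly the arcs along a spanning path (given by the enumeration `e`),
then the least `m` with `T' = Inv(T, (X_i)_{i<m})` is exactly `n − 1`; in particular
the maximal distance `n − 1` is attained. -/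
theorem dist_to_path_reversal {V : Type*} [Fintype V] (n : ℕ) (hcard : Fintype.card V = n)
    (e : Fin n ≃ V) (T T' : Tournament V)
    (hT' : ∀ x y : V, x ≠ y →
      (T'.rel x y ↔
        ((pathAdj (e.symm x) (e.symm y) ∧ T.rel y x) ∨
         (¬ pathAdj (e.symm x) (e.symm y) ∧ T.rel x y)))) :
    sInf {m | ∃ Xs : List (Set V), Xs.length = m ∧
        ∀ x y, (T.invSeq Xs).rel x y ↔ T'.rel x y} = n - 1 :=
  dist_to_path_reversal_general n e T T' hT'
end

section
/- Let T be a finite tournament with at least 2 vertices. Then T is acyclically indecomposable with i(T) ≤ 1 if and only if T is isomorphic to U_{2n+1}, 2̲(1̲, U_{2n+1}), 2̲(U_{2n+1}, 1̲), or 3̲(1̲, U_{2n+1}, 1̲) for some n ≥ 1, where U_{2n+1} := Inv(2n+1̲, 2ℕ_{<n+1}). -/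
namespace Tournament

/-- A tournament is acyclically indecomposable if it has no acyclic interval with
more than one element. -/
def AcyclicallyIndecomposable {V : Type*} (T : Tournament V) : Prop :=
  ∀ X : Set V, T.IsInterval X → (T.restrict X).IsAcyclic → X.Subsingleton

/-- Adjoin a new vertex dominating all vertices of `T`: the lexicographic sum
`2̲(1̲, T)`. -/
def cone {V : Type*} (T : Tournament V) : Tournament (Option V) where
  rel x y := y.elim False (fun b => x.elim True (fun a => T.rel a b))
  irrefl x := by cases x <;> simp [Option.elim] <;> exact T.irrefl _
  total x y hxy := by
    cases x with
    | none =>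
      cases y with
      | none => exact absurd rfl hxy
      | some b => left; trivial
    | some a =>
      cases y with
      | none => right; trivial
      | some b =>
        have hab : a ≠ b := fun h => hxy (by rw [h])
        rcases T.total a b hab with h | h
        · left; exact h
        · right; exact h
  asymm x y h hc := by
    cases x <;> cases y
    · exact h
    · exact hc
    · exact h
    · exact T.asymm _ _ h hc

/-- Adjoin a new vertex dominated by all vertices of `T`: the lexicographic sum
`2̲(T, 1̲)`. -/
def cocone {V : Type*} (T : Tournament V) : Tournament (Option V) :=
  (T.dual.cone).dual

end Tournament

/-- `U_{2n+1} := Inv(2n+1̲, 2ℕ_{<n+1})`. -/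
def U (n : ℕ) : Tournament (Fin (2 * n + 1)) :=
  (linear (2 * n + 1)).inv (evensLT (n + 1))


/-!
If `Inv(T, X)` is acyclic, then `T ≅ Inv(N̲, A)` for some `A ⊆ {0, …, N-1}`, so index at most
one means being of this form. In `Inv(N̲, A)` two consecutive vertices `i, i + 1` lying both in
`A` or both outside `A` form an acyclic interval, so acyclic indecomposability forces `A` to
alternate, i.e. `A` is the set of even or of odd vertices; the parities of `A` and of `N` give the
four families. Conversely, for alternating `A` with two elements every interval is order-convex
and contains `A`, hence contains a `3`-cycle `c, c + 1, c + 2` with `c ∈ A`.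
-/

namespace Tournament

variable {V W : Type*}

theorem ext {S T : Tournament V} (h : ∀ x y, S.rel x y ↔ T.rel x y) : S = T := by
  obtain ⟨r, _, _, _⟩ := S
  obtain ⟨r', _, _, _⟩ := T
  obtain rfl : r = r' := funext₂ fun x y => propext (h x y)
  rfl

theorem inv_rel (T : Tournament V) (X : Set V) (x y : V) :
    (T.inv X).rel x y ↔ (x ∈ X ∧ y ∈ X ∧ T.rel y x) ∨ ((x ∉ X ∨ y ∉ X) ∧ T.rel x y) :=
  Iff.rfl

@[simp] theorem inv_inv (T : Tournament V) (X : Set V) : (T.inv X).inv X = T :=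
  ext fun x y => by
    simp only [inv_rel]
    by_cases hx : x ∈ X <;> by_cases hy : y ∈ X <;> tauto

theorem inv_eq_self_of_subsingleton (T : Tournament V) {A : Set V} (hA : A.Subsingleton) :
    T.inv A = T :=
  ext fun x y => by
    rw [inv_rel]
    by_cases hxy : x = y
    · subst hxy
      have := T.irrefl x
      tauto
    · have : ¬ (x ∈ A ∧ y ∈ A) := fun h => hxy (hA h.1 h.2)
      tauto

theorem Iso.refl (T : Tournament V) : T.Iso T := ⟨Equiv.refl V, fun _ _ => Iff.rfl⟩

theorem Iso.symm {S : Tournament V} {T : Tournament W} : S.Iso T → T.Iso S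
  | ⟨e, he⟩ => ⟨e.symm, fun x y => by simpa using (he (e.symm x) (e.symm y)).symm⟩

theorem Iso.trans {U : Type*} {S : Tournament V} {T : Tournament W} {R : Tournament U} :
    S.Iso T → T.Iso R → S.Iso R
  | ⟨e, he⟩, ⟨e', he'⟩ => ⟨e.trans e', fun x y => (he x y).trans (he' _ _)⟩

theorem Iso.isAcyclic {S : Tournament V} {T : Tournament W} (h : S.Iso T) (hT : T.IsAcyclic) :
    S.IsAcyclic := by
  obtain ⟨e, he⟩ := h
  intro x y z hxy hyz
  exact (he x z).2 (hT _ _ _ ((he x y).1 hxy) ((he y z).1 hyz))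

theorem Iso.exists_inv {S : Tournament V} {T : Tournament W} (h : S.Iso T) (X : Set V) :
    ∃ Y : Set W, (S.inv X).Iso (T.inv Y) := by
  obtain ⟨e, he⟩ := h
  refine ⟨e.symm ⁻¹' X, e, fun x y => ?_⟩
  simp only [inv_rel, Set.mem_preimage, Equiv.symm_apply_apply, he]

theorem IsInterval.rel_iff {T : Tournament V} {X : Set V} (hX : T.IsInterval X) {u v y : V}
    (hu : u ∈ X) (hv : v ∈ X) (hy : y ∉ X) : T.rel u y ↔ T.rel v y := by
  rcases hX y hy with h | h
  · exact iff_of_true (h u hu) (h v hv)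
  · exact iff_of_false (T.asymm _ _ (h u hu)) (T.asymm _ _ (h v hv))

theorem isInterval_pair {T : Tournament V} {a b : V}
    (h : ∀ y, y ≠ a → y ≠ b → (T.rel a y ↔ T.rel b y)) : T.IsInterval {a, b} := by
  intro y hy
  simp only [Set.mem_insert_iff, Set.mem_singleton_iff, not_or] at hy
  have hab := h y hy.1 hy.2
  by_cases ha : T.rel a y
  · left
    rintro x (rfl | rfl)
    exacts [ha, hab.1 ha]
  · right
    rintro x (rfl | rfl)
    · exact (T.total _ _ hy.1).resolve_right ha
    · exact (T.total _ _ hy.2).resolve_right (mt hab.2 ha)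

theorem isAcyclic_restrict_pair (T : Tournament V) (a b : V) :
    (T.restrict {a, b}).IsAcyclic := by
  rintro ⟨x, hx⟩ ⟨y, hy⟩ ⟨z, hz⟩ hxy hyz
  simp only [Set.mem_insert_iff, Set.mem_singleton_iff] at hx hy hz
  rcases hx with rfl | rfl <;> rcases hy with rfl | rfl <;> rcases hz with rfl | rfl <;>
    first
    | exact absurd hxy (T.irrefl _)
    | exact absurd hyz (T.irrefl _)
    | exact absurd hyz (T.asymm _ _ hxy)

theorem Iso.acyclicallyIndecomposable {S : Tournament V} {T : Tournament W} (h : S.Iso T)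
    (hT : T.AcyclicallyIndecomposable) : S.AcyclicallyIndecomposable := by
  obtain ⟨e, he⟩ := h
  intro X hX hXac
  have hint : T.IsInterval (e '' X) := by
    intro y hy
    have hy' : e.symm y ∉ X := fun h => hy ⟨_, h, e.apply_symm_apply y⟩
    rcases hX _ hy' with h | h
    · left
      rintro _ ⟨x, hx, rfl⟩
      simpa using (he x _).1 (h x hx)
    · right
      rintro _ ⟨x, hx, rfl⟩
      simpa using (he _ x).1 (h x hx)
  have hac : (T.restrict (e '' X)).IsAcyclic := by
    rintro ⟨_, x, hx, rfl⟩ ⟨_, y, hy, rfl⟩ ⟨_, z, hz, rfl⟩ hxy hyz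
    exact (he x z).1 (hXac ⟨x, hx⟩ ⟨y, hy⟩ ⟨z, hz⟩ ((he x y).2 hxy) ((he y z).2 hyz))
  intro x hx y hy
  exact e.injective (hT _ hint hac ⟨x, hx, rfl⟩ ⟨y, hy, rfl⟩)

theorem AcyclicallyIndecomposable.not_isAcyclic [Nontrivial V] {T : Tournament V}
    (h : T.AcyclicallyIndecomposable) : ¬ T.IsAcyclic := fun hT =>
  not_subsingleton V <| Set.subsingleton_univ_iff.1 <|
    h Set.univ (fun _ hy => absurd trivial hy) fun x y z => hT x y z

theorem IsAcyclic.iso_linear [Fintype V] {T : Tournament V} (hT : T.IsAcyclic) :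
    T.Iso (linear (Fintype.card V)) := by
  have : IsStrictTotalOrder V T.rel :=
    { trichotomous := fun x y hxy hyx => by_contra fun hne => (T.total x y hne).elim hxy hyx
      irrefl := T.irrefl
      trans := hT }
  classical
  let _ : LinearOrder V := linearOrderOfSTO T.rel
  let e := (Fintype.orderIsoFinOfCardEq V rfl).symm
  exact ⟨e.toEquiv, fun x y => show x < y ↔ e x < e y from e.lt_iff_lt.symm⟩

def backArcs (T : Tournament V) (f : V → ℕ) : Set (V × V) :=
  {p | T.rel p.1 p.2 ∧ f p.2 < f p.1}

theorem isAcyclic_of_backArcs_eq_empty {T : Tournament V} {f : V → ℕ} (hf : f.Injective)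
    (h : T.backArcs f = ∅) : T.IsAcyclic := by
  have hlt : ∀ x y, T.rel x y → f x < f y := fun x y hxy => by
    have hback : ¬ (T.rel x y ∧ f y < f x) := fun hb => Set.notMem_empty (x, y) (h ▸ hb)
    have hne : f x ≠ f y := fun hfxy => T.irrefl y (hf hfxy ▸ hxy)
    exact lt_of_le_of_ne (not_lt.1 fun hyx => hback ⟨hxy, hyx⟩) hne
  intro x y z hxy hyz
  have hxz := (hlt x y hxy).trans (hlt y z hyz)
  exact (T.total x z fun h => by subst h; omega).resolve_right fun hzx => by
    have := hlt z x hzx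
    omega

theorem backArcs_inv_pair_ssubset {T : Tournament V} {f : V → ℕ} {a b : V}
    (hab : (a, b) ∈ T.backArcs f) : (T.inv {a, b}).backArcs f ⊂ T.backArcs f := by
  obtain ⟨hab, hba : f b < f a⟩ := hab
  refine ⟨?_, fun hsub => ?_⟩
  · rintro ⟨x, y⟩ ⟨hxy, hyx : f y < f x⟩
    rcases hxy with ⟨hx, hy, hr⟩ | ⟨-, hr⟩
    · simp only [Set.mem_insert_iff, Set.mem_singleton_iff] at hx hy
      rcases hx with rfl | rfl <;> rcases hy with rfl | rfl
      · exact absurd hr (T.irrefl _)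
      · exact absurd hr (T.asymm _ _ hab)
      · exact absurd hba (by omega)
      · exact absurd hr (T.irrefl _)
    · exact ⟨hr, hyx⟩
  · obtain ⟨hr, -⟩ := hsub ⟨hab, hba⟩
    rcases hr with ⟨-, -, hr⟩ | ⟨hr, -⟩
    · exact T.asymm _ _ hab hr
    · simp at hr

/-- Inverting the back arcs one pair at a time; this makes the `sInf` in `index` a genuine
minimum rather than the junk value `sInf ∅ = 0`. -/
theorem exists_invSeq_isAcyclic [Finite V] (T : Tournament V) :
    ∃ Xs : List (Set V), (T.invSeq Xs).IsAcyclic := by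
  obtain ⟨n, ⟨e⟩⟩ := Finite.exists_equiv_fin V
  have hf : (fun v => (e v : ℕ)).Injective := Fin.val_injective.comp e.injective
  suffices ∀ k (T : Tournament V), (T.backArcs fun v => (e v : ℕ)).ncard = k →
      ∃ Xs : List (Set V), (T.invSeq Xs).IsAcyclic from this _ T rfl
  intro k
  induction k using Nat.strong_induction_on with
  | _ k ih =>
    intro T hk
    obtain h | ⟨⟨a, b⟩, hab⟩ := (T.backArcs fun v => (e v : ℕ)).eq_empty_or_nonempty
    · exact ⟨[], isAcyclic_of_backArcs_eq_empty hf h⟩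
    · obtain ⟨Xs, hXs⟩ := ih _ (hk ▸ Set.ncard_lt_ncard (backArcs_inv_pair_ssubset hab)) _ rfl
      exact ⟨{a, b} :: Xs, hXs⟩

theorem index_le_one_of_inv_isAcyclic {T : Tournament V} {X : Set V} (h : (T.inv X).IsAcyclic) :
    T.index ≤ 1 :=
  Nat.sInf_le ⟨[X], rfl, h⟩

theorem exists_inv_isAcyclic_of_index_le_one [Finite V] {T : Tournament V} (h : T.index ≤ 1) :
    ∃ X : Set V, (T.inv X).IsAcyclic := by
  obtain ⟨Xs, hXs⟩ := T.exists_invSeq_isAcyclic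
  obtain ⟨Ys, hlen, hYs⟩ := Nat.sInf_mem
    (s := {m | ∃ Ys : List (Set V), Ys.length = m ∧ (T.invSeq Ys).IsAcyclic}) ⟨_, Xs, rfl, hXs⟩
  match Ys, (hlen ▸ h : Ys.length ≤ 1), hYs with
  | [], _, hYs => exact ⟨∅, by rwa [inv_eq_self_of_subsingleton _ Set.subsingleton_empty]⟩
  | [X], _, hYs => exact ⟨X, hYs⟩

end Tournament

def Alternating {N : ℕ} (A : Set (Fin N)) : Prop :=
  ∀ i j : Fin N, (i : ℕ) + 1 = j → (i ∈ A ↔ j ∉ A)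

theorem Alternating.mem_iff {N : ℕ} {A : Set (Fin N)} (hA : Alternating A) (i : Fin N) :
    i ∈ A ↔ (⟨0, i.pos⟩ ∈ A ↔ (i : ℕ) % 2 = 0) := by
  obtain ⟨k, hk⟩ := i
  induction k with
  | zero => simp
  | succ k ih =>
    have hstep := hA ⟨k, by omega⟩ ⟨k + 1, hk⟩ rfl
    have hpar : (k + 1) % 2 = 0 ↔ ¬ k % 2 = 0 := by omega
    have := ih (by omega)
    simp only at this hpar ⊢
    tauto

theorem alternating_evensLT {N k : ℕ} (h : N ≤ 2 * k) : Alternating (evensLT k : Set (Fin N)) :=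
  fun i j hij => by simp only [evensLT, Set.mem_ofPred_eq]; omega

theorem alternating_oddsLT {N k : ℕ} (h : N ≤ 2 * k + 1) :
    Alternating (oddsLT k : Set (Fin N)) :=
  fun i j hij => by simp only [oddsLT, Set.mem_ofPred_eq]; omega

theorem nontrivial_evensLT {N k : ℕ} (hN : 3 ≤ N) (hk : 2 ≤ k) :
    (evensLT k : Set (Fin N)).Nontrivial :=
  ⟨⟨0, by omega⟩, by simp [evensLT]; omega, ⟨2, by omega⟩, by simp [evensLT]; omega, by simp⟩

theorem nontrivial_oddsLT {N k : ℕ} (hN : 4 ≤ N) (hk : 2 ≤ k) :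
    (oddsLT k : Set (Fin N)).Nontrivial :=
  ⟨⟨1, by omega⟩, by simp [oddsLT]; omega, ⟨3, by omega⟩, by simp [oddsLT]; omega, by simp⟩

namespace Tournament

variable {V : Type*} {N : ℕ} {A X : Set (Fin N)}

theorem linear_isAcyclic (N : ℕ) : (linear N).IsAcyclic := fun _ _ _ => lt_trans

theorem linear_inv_rel (A : Set (Fin N)) (x y : Fin N) :
    ((linear N).inv A).rel x y ↔ (x ∈ A ∧ y ∈ A ∧ y < x) ∨ ((x ∉ A ∨ y ∉ A) ∧ x < y) :=
  Iff.rfl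

theorem AcyclicallyIndecomposable.alternating
    (h : ((linear N).inv A).AcyclicallyIndecomposable) : Alternating A := by
  intro i j hij
  by_contra hsame
  have hint : ((linear N).inv A).IsInterval {i, j} := isInterval_pair fun y hyi hyj => by
    have : (y : ℕ) ≠ i := Fin.val_ne_of_ne hyi
    have : (y : ℕ) ≠ j := Fin.val_ne_of_ne hyj
    simp only [linear_inv_rel]
    by_cases hiA : i ∈ A <;> by_cases hjA : j ∈ A <;> by_cases hyA : y ∈ A <;> simp_all <;> omega
  have := h _ hint (isAcyclic_restrict_pair _ i j) (Set.mem_insert i {j})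
    (Set.mem_insert_of_mem i rfl)
  omega

theorem IsInterval.ordConnected_of_alternating (hX : ((linear N).inv A).IsInterval X)
    (hA : Alternating A) : X.OrdConnected := by
  have gap : ∀ ⦃u v y⦄, u ∈ X → v ∈ X → y ∉ X → u < y → y < v → y ∈ A ∧ (u ∈ A ↔ v ∉ A) := by
    intro u v y hu hv hy huy hyv
    have := hX.rel_iff hu hv hy
    simp only [linear_inv_rel] at this
    by_cases hyA : y ∈ A <;> by_cases huA : u ∈ A <;> by_cases hvA : v ∈ A <;> simp_all <;> omega
  refine Set.ordConnected_of_Ioo fun u hu v hv _ y ⟨huy, hyv⟩ => by_contra fun hy => ?_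
  have hyA := (gap hu hv hy huy hyv).1
  have fill : ∀ w, w ∉ A → u ≤ w → w ≤ v → w ∈ X := fun w hwA huw hwv => by_contra fun hw =>
    hwA (gap hu hv hw (lt_of_le_of_ne huw (by rintro rfl; exact hw hu))
      (lt_of_le_of_ne hwv (by rintro rfl; exact hw hv))).1
  -- a gap `y` lies in `A`, so its neighbours `y - 1, y + 1` lie outside `A`, hence inside `X`,
  -- and `gap` fails for them
  let p : Fin N := ⟨y - 1, by omega⟩
  let q : Fin N := ⟨y + 1, by omega⟩
  have hpA : p ∉ A := fun hp => (hA p y (by simp [p]; omega)).1 hp hyA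
  have hqA : q ∉ A := (hA y q rfl).1 hyA
  have hpq := (gap (fill p hpA (by simp [p, Fin.le_def]; omega) (by simp [p, Fin.le_def]; omega))
    (fill q hqA (by simp [q, Fin.le_def]; omega) (by simp [q, Fin.le_def]; omega)) hy
    (by simp [p, Fin.lt_def]; omega) (by simp [q, Fin.lt_def])).2
  exact hpA (hpq.2 hqA)

theorem IsInterval.alternating_subset (hX : ((linear N).inv A).IsInterval X)
    (hA : Alternating A) {p q : Fin N} (hp : p ∈ X) (hq : q ∈ X)
    (hpq : (p : ℕ) + 1 = q) : A ⊆ X := by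
  intro z hz
  by_contra hzX
  have hrel := hX.rel_iff hp hq hzX
  have halt := hA p q hpq
  have : (z : ℕ) ≠ p := Fin.val_ne_of_ne fun h => hzX (h ▸ hp)
  have : (z : ℕ) ≠ q := Fin.val_ne_of_ne fun h => hzX (h ▸ hq)
  simp only [linear_inv_rel] at hrel
  by_cases hpA : p ∈ A <;> simp_all <;> omega

theorem acyclicallyIndecomposable_linear_inv (hA : Alternating A) (hnt : A.Nontrivial) :
    ((linear N).inv A).AcyclicallyIndecomposable := by
  intro X hX hac
  by_contra hXnt
  obtain ⟨u, hu, v, hv, huv⟩ := (Set.not_subsingleton_iff.1 hXnt).exists_lt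
  have hconn := hX.ordConnected_of_alternating hA
  let u₁ : Fin N := ⟨u + 1, by omega⟩
  have hu₁ : u₁ ∈ X :=
    hconn.out hu hv ⟨by simp [u₁, Fin.le_def], by simp [u₁, Fin.le_def]; omega⟩
  have hAX := hX.alternating_subset hA hu hu₁ rfl
  obtain ⟨c, hc, d, hd, hcd⟩ := hnt.exists_lt
  let c₁ : Fin N := ⟨c + 1, by omega⟩
  have hc₁ : c₁ ∉ A := (hA c c₁ rfl).1 hc
  have hc₁d : (c : ℕ) + 1 < d :=
    lt_of_le_of_ne (by omega) fun h => hc₁ ((Fin.ext h : c₁ = d) ▸ hd)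
  let c₂ : Fin N := ⟨c + 2, by omega⟩
  have hc₂ : c₂ ∈ A := by_contra fun h => hc₁ ((hA c₁ c₂ rfl).2 h)
  have h₁ : ((linear N).inv A).rel c c₁ := Or.inr ⟨Or.inr hc₁, Fin.lt_def.2 (by simp [c₁])⟩
  have h₂ : ((linear N).inv A).rel c₁ c₂ := Or.inr ⟨Or.inl hc₁, Fin.lt_def.2 (by simp [c₁, c₂])⟩
  have h₃ : ((linear N).inv A).rel c₂ c := Or.inl ⟨hc₂, hc, Fin.lt_def.2 (by simp [c₂])⟩
  have hc₁X : c₁ ∈ X :=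
    hconn.out (hAX hc) (hAX hc₂) ⟨by simp [c₁, Fin.le_def], by simp [c₁, c₂, Fin.le_def]⟩
  exact ((linear N).inv A).asymm _ _
    (hac ⟨c, hAX hc⟩ ⟨c₁, hc₁X⟩ ⟨c₂, hAX hc₂⟩ h₁ h₂) h₃

theorem cone_U_iso (n : ℕ) : (U n).cone.Iso ((linear (2 * n + 2)).inv (oddsLT (n + 1))) := by
  refine ⟨(finSuccEquiv (2 * n + 1)).symm, ?_⟩
  rintro (_ | a) (_ | b) <;>
    simp [cone, U, linear_inv_rel, ← Fin.val_fin_lt, evensLT, oddsLT]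
  omega

theorem cocone_U_iso (n : ℕ) :
    (U n).cocone.Iso ((linear (2 * n + 2)).inv (evensLT (n + 1))) := by
  refine ⟨finSuccEquivLast.symm, ?_⟩
  rintro (_ | a) (_ | b) <;>
    simp [cone, cocone, dual, U, linear_inv_rel, ← Fin.val_fin_lt, evensLT]
  omega

theorem cone_cocone_U_iso (n : ℕ) :
    (U n).cone.cocone.Iso ((linear (2 * n + 3)).inv (oddsLT (n + 1))) := by
  refine ⟨(Equiv.optionCongr (finSuccEquiv (2 * n + 1)).symm).trans finSuccEquivLast.symm, ?_⟩
  rintro (_ | _ | a) (_ | _ | b) <;>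
    simp [cone, cocone, dual, U, linear_inv_rel, ← Fin.val_fin_lt, evensLT, oddsLT,
      Equiv.optionCongr] <;>
    omega

theorem linear_inv_iso_of_alternating (hA : Alternating A) (hnt : A.Nontrivial) :
    ∃ n, 1 ≤ n ∧
      (((linear N).inv A).Iso (U n) ∨ ((linear N).inv A).Iso (U n).cone ∨
        ((linear N).inv A).Iso (U n).cocone ∨ ((linear N).inv A).Iso (U n).cone.cocone) := by
  obtain ⟨x, hx, y, hy, hxy⟩ := hnt.exists_lt
  by_cases hA₀ : (⟨0, x.pos⟩ : Fin N) ∈ A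
  · have hAe : ∀ i : Fin N, i ∈ A ↔ (i : ℕ) % 2 = 0 := fun i => by simpa [hA₀] using hA.mem_iff i
    have := (hAe x).1 hx
    have := (hAe y).1 hy
    obtain ⟨n, rfl | rfl⟩ : ∃ n, N = 2 * n + 1 ∨ N = 2 * n + 2 := ⟨(N - 1) / 2, by omega⟩ <;>
    obtain rfl : A = evensLT (n + 1) := Set.ext fun i =>
      (hAe i).trans (by have := i.isLt; simp [evensLT]; omega)
    · exact ⟨n, by omega, .inl (.refl _)⟩
    · exact ⟨n, by omega, .inr (.inr (.inl (cocone_U_iso n).symm))⟩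
  · have hAo : ∀ i : Fin N, i ∈ A ↔ (i : ℕ) % 2 = 1 := fun i => by
      simpa [hA₀, Nat.mod_two_ne_zero] using hA.mem_iff i
    have := (hAo x).1 hx
    have := (hAo y).1 hy
    obtain ⟨n, rfl | rfl⟩ : ∃ n, N = 2 * n + 2 ∨ N = 2 * n + 3 := ⟨(N - 2) / 2, by omega⟩ <;>
    obtain rfl : A = oddsLT (n + 1) := Set.ext fun i =>
      (hAo i).trans (by have := i.isLt; simp [oddsLT]; omega)
    · exact ⟨n, by omega, .inr (.inl (cone_U_iso n).symm)⟩
    · exact ⟨n, by omega, .inr (.inr (.inr (cone_cocone_U_iso n).symm))⟩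

theorem exists_alternating_iso_linear_inv [Fintype V] {T : Tournament V}
    (hV : 2 ≤ Fintype.card V) (hT : T.AcyclicallyIndecomposable) (hidx : T.index ≤ 1) :
    ∃ A : Set (Fin (Fintype.card V)),
      Alternating A ∧ A.Nontrivial ∧ T.Iso ((linear (Fintype.card V)).inv A) := by
  obtain ⟨X, hX⟩ := exists_inv_isAcyclic_of_index_le_one hidx
  obtain ⟨A, hA⟩ := hX.iso_linear.exists_inv X
  rw [inv_inv] at hA
  have hAI := hA.symm.acyclicallyIndecomposable hT
  have : Nontrivial (Fin (Fintype.card V)) := Fin.nontrivial_iff_two_le.2 hV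
  refine ⟨A, hAI.alternating, Set.not_subsingleton_iff.1 fun hsub => ?_, hA⟩
  rw [inv_eq_self_of_subsingleton _ hsub] at hAI
  exact hAI.not_isAcyclic (linear_isAcyclic _)

theorem acyclicallyIndecomposable_and_index_le_one_of_iso_linear_inv {T : Tournament V}
    (hA : Alternating A) (hnt : A.Nontrivial) (h : T.Iso ((linear N).inv A)) :
    T.AcyclicallyIndecomposable ∧ T.index ≤ 1 := by
  refine ⟨h.acyclicallyIndecomposable (acyclicallyIndecomposable_linear_inv hA hnt), ?_⟩
  obtain ⟨Y, hY⟩ := h.symm.exists_inv A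
  rw [inv_inv] at hY
  exact index_le_one_of_inv_isAcyclic (hY.symm.isAcyclic (linear_isAcyclic N))

end Tournament

/-- a finite tournament with at least two vertices is an acyclically
indecomposable tournament of inversion index at most `1` iff it is isomorphic to
`U_{2n+1}`, `2̲(1̲, U_{2n+1})`, `2̲(U_{2n+1}, 1̲)` or `3̲(1̲, U_{2n+1}, 1̲)` for some
`n ≥ 1`. -/
theorem acyclically_indecomposable_index_le_one {V : Type*} [Fintype V]
    (T : Tournament V) (hcard : 2 ≤ Fintype.card V) :
    (T.AcyclicallyIndecomposable ∧ T.index ≤ 1) ↔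
      ∃ n : ℕ, 1 ≤ n ∧
        (T.Iso (U n) ∨ T.Iso (U n).cone ∨ T.Iso (U n).cocone ∨
          T.Iso (U n).cone.cocone) := by
  constructor
  · rintro ⟨hT, hidx⟩
    obtain ⟨A, hA, hnt, hiso⟩ := Tournament.exists_alternating_iso_linear_inv hcard hT hidx
    obtain ⟨n, hn, h | h | h | h⟩ := Tournament.linear_inv_iso_of_alternating hA hnt
    exacts [⟨n, hn, .inl (hiso.trans h)⟩, ⟨n, hn, .inr (.inl (hiso.trans h))⟩,
      ⟨n, hn, .inr (.inr (.inl (hiso.trans h)))⟩, ⟨n, hn, .inr (.inr (.inr (hiso.trans h)))⟩]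
  · rintro ⟨n, hn, h | h | h | h⟩
    · exact Tournament.acyclicallyIndecomposable_and_index_le_one_of_iso_linear_inv
        (alternating_evensLT (by omega)) (nontrivial_evensLT (by omega) (by omega)) h
    · exact Tournament.acyclicallyIndecomposable_and_index_le_one_of_iso_linear_inv
        (alternating_oddsLT (by omega)) (nontrivial_oddsLT (by omega) (by omega))
        (h.trans (Tournament.cone_U_iso n))
    · exact Tournament.acyclicallyIndecomposable_and_index_le_one_of_iso_linear_inv
        (alternating_evensLT (by omega)) (nontrivial_evensLT (by omega) (by omega))
        (h.trans (Tournament.cocone_U_iso n))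
    · exact Tournament.acyclicallyIndecomposable_and_index_le_one_of_iso_linear_inv
        (alternating_oddsLT (by omega)) (nontrivial_oddsLT (by omega) (by omega))
        (h.trans (Tournament.cone_cocone_U_iso n))
end
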